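/- For every real b > 0 and every complex number x with |Im x| < (b + b⁻¹)/2, the function t ↦ (1/t) · ( sin(2xt) / (2 sinh(bt) sinh(t/b)) − x/t ) is Lebesgue integrable on the interval (0, ∞). (Here sin and sinh denote the complex sine and the real hyperbolic sine respectively.) -/

import Mathlib

open MeasureTheory

/-- The integrand defining `log s_b`. -/
noncomputable def sbIntegrand (b : ℝ) (x : ℂ) (t : ℝ) : ℂ :=
  (1 / (t : ℂ)) *
    (Complex.sin (2 * x * t) /
        (2 * (Real.sinh (b * t) : ℂ) * (Real.sinh (t / b) : ℂ)) - x / t)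

/-!
The integrand is continuous on `(0, ∞)`, so only its behaviour at the two ends matters.
Near `0`, write it as `(t (sin 2xt - 2xt) - 2x (sinh(bt) sinh(t/b) - t²)) / (2t² sinh(bt) sinh(t/b))`:
the Taylor bounds `|sin z - z| ≤ |z|³` and `|sinh s - s| ≤ s³` make the numerator `O(t⁴)`,
while `sinh s ≥ s` makes the denominator at least `2t⁴`, so the integrand is bounded.
Near `∞`, `|sin 2xt| ≤ exp (2 |Im x| t)` and `sinh s ≥ eˢ/4` bound it by
`8 exp (-(Q - 2 |Im x|) t) + |x| / t²`, which is integrable because `2 |Im x| < Q`.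
-/

open Set Real

theorem Complex.norm_sin_sub_self_le {z : ℂ} (hz : ‖z‖ ≤ 1) : ‖sin z - z‖ ≤ ‖z‖ ^ 3 := by
  have h5 : ‖z‖ ^ 5 ≤ ‖z‖ ^ 3 := pow_le_pow_of_le_one (norm_nonneg z) hz (by norm_num)
  calc ‖sin z - z‖ = ‖(sin z - (z - z ^ 3 / 6)) - z ^ 3 / 6‖ := by ring_nf
    _ ≤ ‖z‖ ^ 5 / 100 + ‖z‖ ^ 3 / 6 := by
      refine (norm_sub_le _ _).trans (add_le_add (sin_bound hz) ?_)
      simp [norm_pow]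
    _ ≤ ‖z‖ ^ 3 := by linarith [pow_nonneg (norm_nonneg z) 3]

theorem Real.abs_sinh_sub_self_le {s : ℝ} (hs : |s| ≤ 1) : |sinh s - s| ≤ |s| ^ 3 := by
  have h := Complex.norm_sin_sub_self_le (z := s * Complex.I) (by simpa using hs)
  rwa [Complex.sin_mul_I, ← sub_mul, norm_mul, Complex.norm_I, mul_one, norm_mul,
    Complex.norm_I, mul_one, ← Complex.ofReal_sinh, ← Complex.ofReal_sub,
    Complex.norm_real, Complex.norm_real] at h

theorem Complex.norm_sin_le_exp_abs_im (z : ℂ) : ‖sin z‖ ≤ Real.exp |z.im| := by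
  have h₁ : Real.exp z.im ≤ Real.exp |z.im| := Real.exp_le_exp.2 (le_abs_self _)
  have h₂ : Real.exp (-z.im) ≤ Real.exp |z.im| := Real.exp_le_exp.2 (neg_le_abs _)
  calc ‖sin z‖ = ‖exp (-z * I) - exp (z * I)‖ / 2 := by
        rw [sin, norm_div, norm_mul, norm_I, mul_one, Complex.norm_ofNat]
    _ ≤ (‖exp (-z * I)‖ + ‖exp (z * I)‖) / 2 := by gcongr; exact norm_sub_le _ _
    _ = (Real.exp z.im + Real.exp (-z.im)) / 2 := by simp [norm_exp]
    _ ≤ Real.exp |z.im| := by linarith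

theorem Real.exp_div_four_le_sinh {s : ℝ} (hs : 1 / 2 ≤ s) : exp s / 4 ≤ sinh s := by
  have h : 2 ≤ exp s * exp s := by
    rw [← exp_add]; linarith [add_one_le_exp (s + s)]
  have : exp (-s) * exp s = 1 := by rw [← exp_add, neg_add_cancel, exp_zero]
  rw [sinh_eq]; nlinarith [exp_pos s, exp_pos (-s)]

theorem Real.abs_sinh_mul_sinh_sub_mul_le {u v : ℝ} (hu : 0 ≤ u) (hu₁ : u ≤ 1) (hv : 0 ≤ v)
    (hv₁ : v ≤ 1) : |sinh u * sinh v - u * v| ≤ 2 * u * v * (u ^ 2 + v ^ 2) := by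
  have hA := abs_sinh_sub_self_le (s := u) (by rwa [abs_of_nonneg hu])
  have hB := abs_sinh_sub_self_le (s := v) (by rwa [abs_of_nonneg hv])
  rw [abs_of_nonneg hu] at hA
  rw [abs_of_nonneg hv] at hB
  have hB₂ : sinh v ≤ 2 * v := by
    have : v ^ 3 ≤ v := pow_le_of_le_one hv hv₁ (by norm_num)
    linarith [(abs_le.1 hB).2]
  calc |sinh u * sinh v - u * v| = |(sinh u - u) * sinh v + u * (sinh v - v)| := by ring_nf
    _ ≤ |sinh u - u| * sinh v + u * |sinh v - v| := by
      refine (abs_add_le _ _).trans_eq ?_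
      rw [abs_mul, abs_mul, abs_of_nonneg (sinh_nonneg_iff.2 hv), abs_of_nonneg hu]
    _ ≤ u ^ 3 * (2 * v) + u * v ^ 3 := by gcongr
    _ ≤ 2 * u * v * (u ^ 2 + v ^ 2) := by nlinarith [mul_nonneg hu hv, pow_nonneg hu 3]

theorem continuousOn_sbIntegrand {b : ℝ} (hb : b ≠ 0) (x : ℂ) :
    ContinuousOn (sbIntegrand b x) (Ioi 0) := by
  intro t (ht : 0 < t)
  have hden : 2 * (sinh (b * t) : ℂ) * (sinh (t / b) : ℂ) ≠ 0 := by
    have h₁ : sinh (b * t) ≠ 0 := sinh_eq_zero.not.2 (mul_ne_zero hb ht.ne')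
    have h₂ : sinh (t / b) ≠ 0 := sinh_eq_zero.not.2 (div_ne_zero ht.ne' hb)
    exact mul_ne_zero (mul_ne_zero two_ne_zero (by exact_mod_cast h₁)) (by exact_mod_cast h₂)
  have ht' : (t : ℂ) ≠ 0 := by exact_mod_cast ht.ne'
  refine ContinuousAt.continuousWithinAt ?_
  unfold sbIntegrand
  fun_prop (disch := assumption)

theorem norm_sbIntegrand_le_of_le_one {b t : ℝ} (x : ℂ) (hb : 0 < b) (ht : 0 < t)
    (hbt : b * t ≤ 1) (htb : t / b ≤ 1) (hxt : 2 * ‖x‖ * t ≤ 1) :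
    ‖sbIntegrand b x t‖ ≤ 4 * ‖x‖ ^ 3 + 2 * ‖x‖ * (b ^ 2 + b⁻¹ ^ 2) := by
  set A := sinh (b * t)
  set B := sinh (t / b)
  have hmul : b * t * (t / b) = t ^ 2 := by field_simp
  have hAB : t ^ 2 ≤ A * B := hmul ▸ mul_le_mul (self_le_sinh_iff.2 (by positivity))
    (self_le_sinh_iff.2 (by positivity)) (by positivity) (sinh_nonneg_iff.2 (by positivity))
  have hdiff : |A * B - t ^ 2| ≤ 2 * t ^ 4 * (b ^ 2 + b⁻¹ ^ 2) := by
    have h := abs_sinh_mul_sinh_sub_mul_le (by positivity) hbt (by positivity) htb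
    rw [hmul] at h
    convert h using 1
    field_simp
  have hsin : ‖Complex.sin (2 * x * t) - 2 * x * t‖ ≤ 8 * ‖x‖ ^ 3 * t ^ 3 := by
    have hnorm : ‖2 * x * t‖ = 2 * ‖x‖ * t := by
      simp [Complex.norm_real, abs_of_pos ht]
    calc _ ≤ ‖2 * x * t‖ ^ 3 := Complex.norm_sin_sub_self_le (hnorm ▸ hxt)
      _ = 8 * ‖x‖ ^ 3 * t ^ 3 := by rw [hnorm]; ring
  have hid : sbIntegrand b x t = (t * (Complex.sin (2 * x * t) - 2 * x * t)
      - 2 * x * ((A * B - t ^ 2 : ℝ) : ℂ)) / ((2 * t ^ 2 * (A * B) : ℝ) : ℂ) := by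
    have : (A : ℂ) ≠ 0 := by exact_mod_cast (sinh_pos_iff.2 (by positivity)).ne'
    have : (B : ℂ) ≠ 0 := by exact_mod_cast (sinh_pos_iff.2 (by positivity)).ne'
    have : (t : ℂ) ≠ 0 := by exact_mod_cast ht.ne'
    unfold sbIntegrand
    rw [show sinh (b * t) = A from rfl, show sinh (t / b) = B from rfl]
    simp only [Complex.ofReal_mul, Complex.ofReal_sub, Complex.ofReal_pow, Complex.ofReal_ofNat]
    field_simp
    ring
  rw [hid, norm_div, Complex.norm_real, Real.norm_of_nonneg (by positivity),
    div_le_iff₀ (by positivity)]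
  calc _ ≤ t * (8 * ‖x‖ ^ 3 * t ^ 3) + 2 * ‖x‖ * (2 * t ^ 4 * (b ^ 2 + b⁻¹ ^ 2)) := by
        refine (norm_sub_le _ _).trans (add_le_add ?_ ?_)
        · rw [norm_mul, Complex.norm_real, Real.norm_of_nonneg ht.le]; gcongr
        · rw [norm_mul, norm_mul, Complex.norm_ofNat, Complex.norm_real, Real.norm_eq_abs]; gcongr
    _ = (4 * ‖x‖ ^ 3 + 2 * ‖x‖ * (b ^ 2 + b⁻¹ ^ 2)) * (2 * t ^ 2 * t ^ 2) := by ring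
    _ ≤ _ := by gcongr

theorem norm_sbIntegrand_le_of_one_le {b t : ℝ} (x : ℂ) (hb : 0 < b) (hbt : 1 ≤ b * t)
    (htb : 1 ≤ t / b) :
    ‖sbIntegrand b x t‖ ≤ 8 * exp (-(b + b⁻¹ - 2 * |x.im|) * t) + ‖x‖ * t ^ (-2 : ℝ) := by
  have ht : 0 < t := pos_of_mul_pos_right (by linarith) hb.le
  have ht₁ : 1 ≤ t := by
    have : b * t * (t / b) = t ^ 2 := by field_simp
    nlinarith
  have hA : 0 < sinh (b * t) := sinh_pos_iff.2 (by positivity)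
  have hB : 0 < sinh (t / b) := sinh_pos_iff.2 (by positivity)
  have hden : exp ((b + b⁻¹) * t) / 8 ≤ 2 * sinh (b * t) * sinh (t / b) := by
    have h₁ := exp_div_four_le_sinh (s := b * t) (by linarith)
    have h₂ := exp_div_four_le_sinh (s := t / b) (by linarith)
    have : exp (b * t) * exp (t / b) = exp ((b + b⁻¹) * t) := by
      rw [← exp_add]; ring_nf
    calc _ = 2 * (exp (b * t) / 4) * (exp (t / b) / 4) := by rw [← this]; ring
      _ ≤ _ := by gcongr
  have hsin : ‖Complex.sin (2 * x * t)‖ ≤ exp (2 * |x.im| * t) := by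
    refine (Complex.norm_sin_le_exp_abs_im _).trans (exp_le_exp.2 (le_of_eq ?_))
    simp [abs_mul, abs_of_pos ht]
  calc ‖sbIntegrand b x t‖
      ≤ t⁻¹ * (‖Complex.sin (2 * x * t)‖ / (2 * sinh (b * t) * sinh (t / b)) + ‖x‖ / t) := by
        unfold sbIntegrand
        rw [norm_mul, one_div, norm_inv, Complex.norm_real, norm_of_nonneg ht.le]
        gcongr
        refine (norm_sub_le _ _).trans_eq ?_
        rw [norm_div, norm_div, norm_mul, norm_mul, Complex.norm_ofNat, Complex.norm_real,
          Complex.norm_real, Complex.norm_real, norm_of_nonneg hA.le, norm_of_nonneg hB.le,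
          norm_of_nonneg ht.le]
    _ ≤ 1 * (exp (2 * |x.im| * t) / (exp ((b + b⁻¹) * t) / 8)) + ‖x‖ * (t ^ 2)⁻¹ := by
        rw [mul_add]
        refine add_le_add ?_ (le_of_eq (by field_simp))
        gcongr
        exact inv_le_one_of_one_le₀ ht₁
    _ = _ := by
        rw [rpow_neg ht.le, rpow_two, show -(b + b⁻¹ - 2 * |x.im|) * t
          = 2 * |x.im| * t - (b + b⁻¹) * t by ring, exp_sub]
        ring

theorem sbIntegrand_integrableOn_Ioc {b δ : ℝ} (x : ℂ) (hb : 0 < b) (hδb : δ ≤ b)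
    (hδb' : δ ≤ b⁻¹) (hδx : 2 * ‖x‖ * δ ≤ 1) : IntegrableOn (sbIntegrand b x) (Ioc 0 δ) := by
  refine (integrableOn_const (C := 4 * ‖x‖ ^ 3 + 2 * ‖x‖ * (b ^ 2 + b⁻¹ ^ 2))
    measure_Ioc_lt_top.ne).mono' (((continuousOn_sbIntegrand hb.ne' x).mono
      Ioc_subset_Ioi_self).aestronglyMeasurable measurableSet_Ioc) ?_
  filter_upwards [ae_restrict_mem measurableSet_Ioc] with t ⟨ht, htδ⟩
  refine norm_sbIntegrand_le_of_le_one x hb ht ?_ ((div_le_one hb).2 (htδ.trans hδb)) ?_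
  · calc b * t ≤ b * b⁻¹ := by gcongr; exact htδ.trans hδb'
      _ = 1 := mul_inv_cancel₀ hb.ne'
  · exact le_trans (by gcongr) hδx

theorem sbIntegrand_integrableOn_Ioi {b : ℝ} (x : ℂ) (hb : 0 < b)
    (hx : |x.im| < (b + b⁻¹) / 2) : IntegrableOn (sbIntegrand b x) (Ioi (b + b⁻¹)) := by
  have hR : 0 < b + b⁻¹ := by positivity
  have hg : IntegrableOn (fun t ↦ 8 * exp (-(b + b⁻¹ - 2 * |x.im|) * t) + ‖x‖ * t ^ (-2 : ℝ))
      (Ioi (b + b⁻¹)) :=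
    ((exp_neg_integrableOn_Ioi _ (by linarith)).const_mul 8).add
      ((integrableOn_Ioi_rpow_of_lt (by norm_num) hR).const_mul _)
  refine hg.mono' (((continuousOn_sbIntegrand hb.ne' x).mono
    (Ioi_subset_Ioi hR.le)).aestronglyMeasurable measurableSet_Ioi) ?_
  filter_upwards [ae_restrict_mem measurableSet_Ioi] with t (ht : b + b⁻¹ < t)
  refine norm_sbIntegrand_le_of_one_le x hb ?_ ((le_div_iff₀ hb).2 (by linarith [inv_pos.2 hb]))
  calc 1 = b * b⁻¹ := (mul_inv_cancel₀ hb.ne').symm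
    _ ≤ b * t := by gcongr; linarith

/-- For every `b > 0` and every `x` with `|Im x| < (b + b⁻¹)/2`, the integrand
defining `log s_b` is Lebesgue integrable on `(0, ∞)`. -/
theorem sbIntegrand_integrableOn (b : ℝ) (hb : 0 < b) (x : ℂ)
    (hx : |x.im| < (b + b⁻¹) / 2) :
    IntegrableOn (sbIntegrand b x) (Set.Ioi (0 : ℝ)) := by
  set δ := min (min b b⁻¹) (2 * ‖x‖ + 1)⁻¹
  have hδ : 0 < δ := by positivity
  have hδb : δ ≤ b := (min_le_left _ _).trans (min_le_left _ _)
  have hδb' : δ ≤ b⁻¹ := (min_le_left _ _).trans (min_le_right _ _)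
  have hδx : 2 * ‖x‖ * δ ≤ 1 := by
    have : (2 * ‖x‖ + 1) * δ ≤ 1 := by
      rw [← le_div_iff₀' (by positivity), one_div]
      exact min_le_right _ _
    linarith
  have hmid : IntegrableOn (sbIntegrand b x) (Icc δ (b + b⁻¹)) :=
    ((continuousOn_sbIntegrand hb.ne' x).mono fun t ht ↦ hδ.trans_le ht.1).integrableOn_Icc
  have hcover : Ioi δ ⊆ Icc δ (b + b⁻¹) ∪ Ioi (b + b⁻¹) := by
    rw [Icc_union_Ioi_eq_Ici (by linarith [inv_pos.2 hb])]
    exact Ioi_subset_Ici_self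
  rw [← Ioc_union_Ioi_eq_Ioi hδ.le]
  exact (sbIntegrand_integrableOn_Ioc x hb hδb hδb' hδx).union
    ((hmid.union (sbIntegrand_integrableOn_Ioi x hb hx)).mono_set hcover)
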